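/- Let μ be a probability Borel measure on [0,1] and f(x) = ∫_{[0,1]} x/((1−t)x + t) dμ(t) for x > 0. Then f(x) = x for all x > 0 if and only if μ is the Dirac measure at 1. -/

import Mathlib

/-!
The integrand `x / ((1 - t) * x + t)` is the weighted harmonic mean `1 !ₜ x`. For `x > 1` it is
at most `x`, with equality only at `t = 1`; so the single identity `f 2 = 2` already forces the
probability measure `μ` to be concentrated at `1`.
-/

open MeasureTheory

theorem MeasureTheory.Measure.eq_dirac_of_ae_eq {α : Type*} [MeasurableSpace α]
    [MeasurableSingletonClass α] {μ : Measure α} [IsProbabilityMeasure μ] {a : α}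
    (h : ∀ᵐ x ∂μ, x = a) : μ = Measure.dirac a := by
  have hμ : μ = μ {a} • Measure.dirac a := by
    simpa using (Measure.ae_mem_finset_iff (s := {a})).1 (by simpa using h)
  have h_one : μ {a} = 1 :=
    (prob_compl_eq_zero_iff (measurableSet_singleton a)).1 (ae_iff.1 h)
  rwa [h_one, one_smul] at hμ

section WeightedHarmonicMean

variable {t x : ℝ}

theorem div_sub_mul_add_le_self (ht : t ≤ 1) (hx : 1 ≤ x) :
    x / ((1 - t) * x + t) ≤ x := by
  rw [div_le_iff₀ (by nlinarith)]
  nlinarith [mul_nonneg (mul_nonneg (by linarith : 0 ≤ x) (sub_nonneg.2 ht)) (sub_nonneg.2 hx)]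

theorem eq_one_of_div_sub_mul_add_eq_self (hx : 1 < x) (h : x / ((1 - t) * x + t) = x) :
    t = 1 := by
  have hden : (1 - t) * x + t = 1 := by
    have hden₀ : (1 - t) * x + t ≠ 0 := by
      intro h0; rw [h0, div_zero] at h; linarith
    rwa [div_eq_iff hden₀, left_eq_mul₀ (by linarith)] at h
  nlinarith

end WeightedHarmonicMean

/-- For a probability Borel measure `μ` on `[0,1]` and `f x = ∫ x/((1-t)x+t) dμ(t)` for `x > 0`,
`f` is the identity on `(0,∞)` iff `μ` is the Dirac measure at `1`. -/
theorem stmt_9 (μ : Measure (Set.Icc (0:ℝ) 1)) [IsProbabilityMeasure μ]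
    (f : ℝ → ℝ) (hf : ∀ x > (0:ℝ), f x = ∫ t, x / ((1 - (t:ℝ)) * x + (t:ℝ)) ∂μ) :
    (∀ x > (0:ℝ), f x = x) ↔ μ = Measure.dirac ⟨1, by norm_num⟩ := by
  constructor
  · intro h
    set g : Set.Icc (0:ℝ) 1 → ℝ := fun t ↦ 2 / ((1 - (t:ℝ)) * 2 + t)
    have hg_int : Integrable g μ := by
      refine Continuous.integrable_of_hasCompactSupport ?_ (.of_compactSpace g)
      refine continuous_const.div (by fun_prop) fun t ↦ ?_
      linarith [t.2.2]
    have hg_le : g ≤ᵐ[μ] fun _ ↦ 2 :=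
      ae_of_all _ fun t ↦ div_sub_mul_add_le_self t.2.2 one_le_two
    have hg_eq : g =ᵐ[μ] fun _ ↦ 2 := by
      refine (integral_eq_iff_of_ae_le hg_int (integrable_const _) hg_le).1 ?_
      have h2 : ∫ t, g t ∂μ = 2 := (hf 2 two_pos).symm.trans (h 2 two_pos)
      simpa using h2
    refine Measure.eq_dirac_of_ae_eq ?_
    filter_upwards [hg_eq] with t ht
    exact Subtype.ext (eq_one_of_div_sub_mul_add_eq_self one_lt_two ht)
  · rintro rfl x hx
    simp [hf x hx]
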